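/- Let Õ and Ô be (p·d)×k real block matrices, each consisting of p blocks of size d×k, and write M_{i:j} for the submatrix of a block matrix M consisting of its i-th through j-th blocks. Let s be an integer with 1 ≤ s ≤ p−1, and suppose Õ_{s+1:p} = Õ_{1:p−s}·N₁ˢ for an invertible k×k matrix N₁. Suppose Ô_{1:p−s} has full column rank k, let Ŝ be an invertible k×k matrix, and set E := Õ − Ô Ŝ. Define N̂ := (Ô_{1:p−s}ᴴ Ô_{1:p−s})⁻¹ Ô_{1:p−s}ᴴ Ô_{s+1:p}. Then ‖I − Ŝ⁻¹ N̂ Ŝ N₁⁻ˢ‖ ≤ ‖Ŝ⁻¹‖·(1 + ‖N₁⁻ˢ‖)·‖E‖ / σ_min(Ô_{1:p−s}). -/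

import Mathlib

/-!
Write `Õ = E + Ô Ŝ` and slice: with `B = Ô_{1:p−s}`, `A = Ô_{s+1:p}` and `N = N₁ˢ` the shift
relation becomes `E_{s+1:p} + A Ŝ = (E_{1:p−s} + B Ŝ) N`. The pseudo-inverse
`P = (Bᴴ B)⁻¹ Bᴴ` is a left inverse of `B`, so `N̂ = P A` and
`I − Ŝ⁻¹ N̂ Ŝ N⁻¹ = Ŝ⁻¹ P E_{s+1:p} N⁻¹ − Ŝ⁻¹ P E_{1:p−s}`.
Slices have norm at most `‖E‖`, and `‖P‖ ≤ 1 / σ_min(B)`: for `x = P y` the normal equations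
`Bᴴ B x = Bᴴ y` make `B x` the orthogonal projection of `y` onto the range of `B`, whence
`σ_min(B) ‖x‖ ≤ ‖B x‖ ≤ ‖y‖`.
-/

open scoped Matrix.Norms.L2Operator
open Matrix

noncomputable def sigmaMin {m n : Type*} [Fintype m] [Fintype n] [DecidableEq n]
    (M : Matrix m n ℝ) : ℝ :=
  sInf {r : ℝ | ∃ x : EuclideanSpace ℝ n, ‖x‖ = 1 ∧ r = ‖Matrix.toEuclideanLin M x‖}

/-- For a `(p·d) × k` block matrix `M` with `p` blocks of size `d × k`, the submatrix
consisting of blocks `i, i+1, …, i+len-1` (zero-indexed; this is `M_{i+1:i+len}` in the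
one-indexed notation of the paper). -/
def blockSlice {p d k : ℕ} (M : Matrix (Fin p × Fin d) (Fin k) ℝ) (i len : ℕ)
    (h : i + len ≤ p) : Matrix (Fin len × Fin d) (Fin k) ℝ :=
  fun rd c => M (⟨i + (rd.1 : ℕ), by have := rd.1.isLt; omega⟩, rd.2) c

section

variable {m n : Type*} [Fintype m] [Fintype n] [DecidableEq n]

theorem sigmaMin_nonneg (M : Matrix m n ℝ) : 0 ≤ sigmaMin M :=
  Real.sInf_nonneg fun _ ⟨_, _, hr⟩ => hr ▸ norm_nonneg _

theorem sigmaMin_mul_norm_le (M : Matrix m n ℝ) (x : EuclideanSpace ℝ n) :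
    sigmaMin M * ‖x‖ ≤ ‖toEuclideanLin M x‖ := by
  rcases eq_or_ne x 0 with rfl | hx
  · simp
  have hx' : 0 < ‖x‖ := norm_pos_iff.2 hx
  have hbdd : BddBelow
      {r : ℝ | ∃ x : EuclideanSpace ℝ n, ‖x‖ = 1 ∧ r = ‖toEuclideanLin M x‖} :=
    ⟨0, fun _ ⟨_, _, hr⟩ => hr ▸ norm_nonneg _⟩
  have h : sigmaMin M ≤ ‖toEuclideanLin M x‖ / ‖x‖ :=
    csInf_le hbdd ⟨‖x‖⁻¹ • x, by simp [norm_smul, hx'.ne'], by simp [norm_smul, div_eq_inv_mul]⟩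
  rwa [le_div_iff₀ hx'] at h

theorem sigmaMin_pos [Nonempty n] {M : Matrix m n ℝ}
    (hM : Function.Injective (toEuclideanLin M)) : 0 < sigmaMin M := by
  obtain ⟨K, hK, hKM⟩ := (toEuclideanLin M).injective_iff_antilipschitz.mp hM
  refine (inv_pos.2 (NNReal.coe_pos.2 hK)).trans_le <| le_csInf ?_ ?_
  · exact ⟨_, EuclideanSpace.single (Classical.arbitrary n) 1, by simp, rfl⟩
  rintro _ ⟨x, hx, rfl⟩
  have hKx := hKM.le_mul_dist x 0
  simp only [dist_zero_right, map_zero, hx] at hKx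
  rwa [inv_le_iff_one_le_mul₀' (by exact_mod_cast hK)]

theorem norm_toEuclideanLin_le_of_normal_eq [DecidableEq m] (B : Matrix m n ℝ)
    {x : EuclideanSpace ℝ n} {y : EuclideanSpace ℝ m}
    (h : toEuclideanLin (Bᴴ * B) x = toEuclideanLin Bᴴ y) :
    ‖toEuclideanLin B x‖ ≤ ‖y‖ := by
  set z := toEuclideanLin B x
  have hadj := toEuclideanLin_conjTranspose_eq_adjoint B
  have hz : ‖z‖ * ‖z‖ ≤ ‖z‖ * ‖y‖ :=
    calc ‖z‖ * ‖z‖ = inner ℝ z z := (real_inner_self_eq_norm_mul_norm z).symm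
      _ = inner ℝ x (toEuclideanLin (Bᴴ * B) x) := by
        rw [toLpLin_mul_same, LinearMap.comp_apply, hadj, LinearMap.adjoint_inner_right]
      _ = inner ℝ z y := by
        rw [h, hadj, LinearMap.adjoint_inner_right]
      _ ≤ ‖z‖ * ‖y‖ := real_inner_le_norm z y
  rcases (norm_nonneg z).eq_or_lt with h0 | hpos
  · rw [← h0]; exact norm_nonneg y
  · exact le_of_mul_le_mul_left hz hpos

theorem pinv_mul_self {B : Matrix m n ℝ} (hB : IsUnit (Bᴴ * B).det) :
    (Bᴴ * B)⁻¹ * Bᴴ * B = 1 := by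
  rw [Matrix.mul_assoc, nonsing_inv_mul _ hB]

theorem l2_opNorm_pinv_le [DecidableEq m] (B : Matrix m n ℝ) (hB : IsUnit (Bᴴ * B).det) :
    ‖(Bᴴ * B)⁻¹ * Bᴴ‖ ≤ (sigmaMin B)⁻¹ := by
  rcases isEmpty_or_nonempty n with hn | hn
  · rw [Subsingleton.elim ((Bᴴ * B)⁻¹ * Bᴴ) 0, norm_zero]
    exact inv_nonneg.2 (sigmaMin_nonneg B)
  set P := (Bᴴ * B)⁻¹ * Bᴴ
  have hinj : Function.Injective (toEuclideanLin B) := by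
    refine Function.LeftInverse.injective (g := toEuclideanLin P) fun x => ?_
    rw [← LinearMap.comp_apply, ← toLpLin_mul_same, pinv_mul_self hB, toLpLin_one,
      LinearMap.id_apply]
  have hσ := sigmaMin_pos hinj
  rw [l2_opNorm_def]
  refine ContinuousLinearMap.opNorm_le_bound _ (inv_nonneg.2 hσ.le) fun y => ?_
  change ‖toEuclideanLin P y‖ ≤ _
  have hnormal : toEuclideanLin (Bᴴ * B) (toEuclideanLin P y) = toEuclideanLin Bᴴ y := by
    rw [← LinearMap.comp_apply, ← toLpLin_mul_same, mul_nonsing_inv_cancel_left _ _ hB]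
  rw [inv_mul_eq_div, le_div_iff₀' hσ]
  exact (sigmaMin_mul_norm_le B _).trans (norm_toEuclideanLin_le_of_normal_eq B hnormal)

theorem l2_opNorm_submatrix_le {l : Type*} [Fintype l] (M : Matrix m n ℝ) {f : l → m}
    (hf : Function.Injective f) : ‖M.submatrix f id‖ ≤ ‖M‖ := by
  rw [l2_opNorm_def, l2_opNorm_def]
  refine ContinuousLinearMap.opNorm_le_bound _ (norm_nonneg _) fun x =>
    le_trans ?_ (ContinuousLinearMap.le_opNorm _ x)
  simp only [LinearEquiv.trans_apply, LinearMap.coe_toContinuousLinearMap', EuclideanSpace.norm_eq,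
    ofLp_toLpLin, toLin'_apply]
  have hrow (i : l) : (M.submatrix f id *ᵥ x.ofLp) i = (M *ᵥ x.ofLp) (f i) := rfl
  simp only [hrow]
  refine Real.sqrt_le_sqrt ?_
  generalize M *ᵥ x.ofLp = w
  calc ∑ j, ‖w (f j)‖ ^ 2 = ∑ i ∈ Finset.univ.map ⟨f, hf⟩, ‖w i‖ ^ 2 := by simp
    _ ≤ ∑ i, ‖w i‖ ^ 2 := Finset.sum_le_univ_sum_of_nonneg fun _ => by positivity

theorem isUnit_det_of_rank_eq_card {K : Type*} [Field K] {A : Matrix n n K}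
    (h : A.rank = Fintype.card n) : IsUnit A.det := by
  rw [← isUnit_iff_isUnit_det, ← mulVec_surjective_iff_isUnit, ← Matrix.coe_mulVecLin,
    ← LinearMap.range_eq_top]
  exact Submodule.eq_top_of_finrank_eq (by rw [Module.finrank_fintype_fun_eq_card]; exact h)

theorem isUnit_det_conjTranspose_mul_self {B : Matrix m n ℝ} (h : B.rank = Fintype.card n) :
    IsUnit (Bᴴ * B).det :=
  isUnit_det_of_rank_eq_card (by rw [rank_conjTranspose_mul_self, h])

theorem one_sub_conj_mul_inv_eq_of_shift {R : Type*} [CommRing R] {l : Type*} [Fintype l]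
    [DecidableEq l] {P : Matrix l m R} {A B E₀ Eₛ : Matrix m l R} {N S : Matrix l l R}
    (hPB : P * B = 1) (hS : IsUnit S.det) (hN : IsUnit N.det)
    (hshift : Eₛ + A * S = (E₀ + B * S) * N) :
    1 - S⁻¹ * (P * A) * S * N⁻¹ = S⁻¹ * (P * Eₛ) * N⁻¹ - S⁻¹ * (P * E₀) := by
  have hPAS : P * A * S = P * E₀ * N + S * N - P * Eₛ := by
    rw [Matrix.mul_assoc, eq_sub_of_add_eq' hshift]
    simp only [Matrix.mul_sub, Matrix.add_mul, Matrix.mul_add, ← Matrix.mul_assoc, hPB,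
      Matrix.one_mul]
  calc 1 - S⁻¹ * (P * A) * S * N⁻¹ = 1 - S⁻¹ * (P * A * S) * N⁻¹ := by
        simp only [Matrix.mul_assoc]
    _ = _ := by
      simp only [hPAS, Matrix.mul_sub, Matrix.mul_add, Matrix.sub_mul, Matrix.add_mul,
        ← Matrix.mul_assoc, mul_nonsing_inv_cancel_right _ _ hN, nonsing_inv_mul _ hS]
      abel

theorem norm_one_sub_conj_pinv_mul_inv_le [DecidableEq m] {A B E₀ Eₛ : Matrix m n ℝ}
    {N S : Matrix n n ℝ} (hB : IsUnit (Bᴴ * B).det) (hS : IsUnit S.det) (hN : IsUnit N.det)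
    (hshift : Eₛ + A * S = (E₀ + B * S) * N) {e : ℝ} (hE₀ : ‖E₀‖ ≤ e) (hEₛ : ‖Eₛ‖ ≤ e) :
    ‖1 - S⁻¹ * ((Bᴴ * B)⁻¹ * Bᴴ * A) * S * N⁻¹‖ ≤
      ‖S⁻¹‖ * (1 + ‖N⁻¹‖) * e / sigmaMin B := by
  set P := (Bᴴ * B)⁻¹ * Bᴴ
  rw [one_sub_conj_mul_inv_eq_of_shift (pinv_mul_self hB) hS hN hshift, div_eq_mul_inv]
  have hP : ‖P‖ ≤ (sigmaMin B)⁻¹ := l2_opNorm_pinv_le B hB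
  have hσ : 0 ≤ (sigmaMin B)⁻¹ := inv_nonneg.2 (sigmaMin_nonneg B)
  calc ‖S⁻¹ * (P * Eₛ) * N⁻¹ - S⁻¹ * (P * E₀)‖
      ≤ ‖S⁻¹‖ * (‖P‖ * ‖Eₛ‖) * ‖N⁻¹‖ + ‖S⁻¹‖ * (‖P‖ * ‖E₀‖) := by
        refine (norm_sub_le _ _).trans (add_le_add ?_ ?_)
        · refine (l2_opNorm_mul _ _).trans ?_
          gcongr
          exact (l2_opNorm_mul _ _).trans (by gcongr; exact l2_opNorm_mul _ _)
        · exact (l2_opNorm_mul _ _).trans (by gcongr; exact l2_opNorm_mul _ _)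
    _ ≤ ‖S⁻¹‖ * ((sigmaMin B)⁻¹ * e) * ‖N⁻¹‖ + ‖S⁻¹‖ * ((sigmaMin B)⁻¹ * e) := by gcongr
    _ = ‖S⁻¹‖ * (1 + ‖N⁻¹‖) * e * (sigmaMin B)⁻¹ := by ring

end

theorem blockSlice_eq_submatrix {p d k : ℕ} (M : Matrix (Fin p × Fin d) (Fin k) ℝ)
    (i len : ℕ) (h : i + len ≤ p) :
    blockSlice M i len h = M.submatrix (Prod.map (Fin.castLE h ∘ Fin.natAdd i) id) id :=
  rfl

theorem norm_blockSlice_le {p d k : ℕ} (M : Matrix (Fin p × Fin d) (Fin k) ℝ)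
    (i len : ℕ) (h : i + len ≤ p) : ‖blockSlice M i len h‖ ≤ ‖M‖ := by
  rw [blockSlice_eq_submatrix]
  exact l2_opNorm_submatrix_le M
    (((Fin.castLE_injective h).comp (Fin.natAdd_injective len i)).prodMap Function.injective_id)

@[simp]
theorem blockSlice_add {p d k : ℕ} (M M' : Matrix (Fin p × Fin d) (Fin k) ℝ)
    (i len : ℕ) (h : i + len ≤ p) :
    blockSlice (M + M') i len h = blockSlice M i len h + blockSlice M' i len h :=
  rfl

@[simp]
theorem blockSlice_mul {p d k : ℕ} (M : Matrix (Fin p × Fin d) (Fin k) ℝ)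
    (N : Matrix (Fin k) (Fin k) ℝ) (i len : ℕ) (h : i + len ≤ p) :
    blockSlice (M * N) i len h = blockSlice M i len h * N :=
  rfl

/-- core perturbation estimate of Corollary B.6. Suppose `1 ≤ s ≤ p − 1`,
`Õ_{s+1:p} = Õ_{1:p−s} N₁ˢ` with `N₁` invertible, `Ô_{1:p−s}` has full column rank `k`,
`Ŝ` is invertible, `E := Õ − Ô Ŝ`, and
`N̂ := (Ô_{1:p−s}ᴴ Ô_{1:p−s})⁻¹ Ô_{1:p−s}ᴴ Ô_{s+1:p}`. Then
`‖I − Ŝ⁻¹ N̂ Ŝ N₁⁻ˢ‖ ≤ ‖Ŝ⁻¹‖ (1 + ‖N₁⁻ˢ‖) ‖E‖ / σ_min(Ô_{1:p−s})`. -/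
theorem N1_power_similarity_error {p d k s : ℕ} (hs2 : s ≤ p - 1)
    (Otil Ohat : Matrix (Fin p × Fin d) (Fin k) ℝ)
    (N₁ S : Matrix (Fin k) (Fin k) ℝ) (hN₁ : IsUnit N₁.det)
    (hshift : blockSlice Otil s (p - s) (by omega) =
      blockSlice Otil 0 (p - s) (by omega) * N₁ ^ s)
    (hrank : (blockSlice Ohat 0 (p - s) (by omega)).rank = k)
    (hS : IsUnit S.det)
    (E : Matrix (Fin p × Fin d) (Fin k) ℝ) (hE : E = Otil - Ohat * S)
    (Nhat : Matrix (Fin k) (Fin k) ℝ)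
    (hNhat : Nhat =
      ((blockSlice Ohat 0 (p - s) (by omega))ᴴ * blockSlice Ohat 0 (p - s) (by omega))⁻¹ *
        (blockSlice Ohat 0 (p - s) (by omega))ᴴ * blockSlice Ohat s (p - s) (by omega)) :
    ‖(1 : Matrix (Fin k) (Fin k) ℝ) - S⁻¹ * Nhat * S * (N₁ ^ s)⁻¹‖ ≤
      ‖S⁻¹‖ * (1 + ‖(N₁ ^ s)⁻¹‖) * ‖E‖ / sigmaMin (blockSlice Ohat 0 (p - s) (by omega)) := by
  have hOtil : Otil = E + Ohat * S := by rw [hE, sub_add_cancel]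
  rw [hOtil] at hshift
  simp only [blockSlice_add, blockSlice_mul] at hshift
  rw [hNhat]
  exact norm_one_sub_conj_pinv_mul_inv_le
    (isUnit_det_conjTranspose_mul_self (by rw [hrank, Fintype.card_fin])) hS
    (by rw [det_pow]; exact hN₁.pow s) hshift (norm_blockSlice_le E _ _ _)
    (norm_blockSlice_le E _ _ _)
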